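/- Let s ≥ 1, let λ_1, …, λ_s be pairwise distinct real numbers and b_1, …, b_s complex numbers. If Σ_{j=1}^{s} b_j·e^{iλ_j t} tends to 0 as t → ∞ (t real), then b_j = 0 for every j. -/

import Mathlib

open MeasureTheory Metric Complex ComplexConjugate Finset
open scoped ENNReal

noncomputable section

/-- `ℂ^N` with its (product) Lebesgue measure; `EuclideanSpace ℂ (Fin N)` is definitionally
`Fin N → ℂ`. -/
instance (N : ℕ) : MeasureSpace (EuclideanSpace ℂ (Fin N)) where
  volume := (volume : Measure (Fin N → ℂ)).map (WithLp.toLp 2)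

variable {N : ℕ}

/-- Hermitian inner product `⟨z,w⟩ = Σ z_j conj(w_j)`. -/
def hinner (z w : EuclideanSpace ℂ (Fin N)) : ℂ := ∑ j, z j * conj (w j)

/-- Lebesgue measure on `ℂ^N` normalized so that the unit ball has measure 1. -/
def volB (N : ℕ) : Measure (EuclideanSpace ℂ (Fin N)) :=
  (volume (ball (0 : EuclideanSpace ℂ (Fin N)) 1))⁻¹ • volume

/-- The Berezin transform of `u`. -/
def berezin (u : EuclideanSpace ℂ (Fin N) → ℂ) (z : EuclideanSpace ℂ (Fin N)) : ℂ :=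
  (((1 - ‖z‖ ^ 2) ^ (N + 1) : ℝ) : ℂ) *
    ∫ ξ in ball (0 : EuclideanSpace ℂ (Fin N)) 1,
      u ξ / ((‖1 - hinner z ξ‖ ^ (2 * (N + 1)) : ℝ) : ℂ) ∂(volB N)

/-- Pluriharmonic on the unit ball: sum of a holomorphic and an anti-holomorphic function. -/
def Pluriharmonic (h : EuclideanSpace ℂ (Fin N) → ℂ) : Prop :=
  ∃ f g : EuclideanSpace ℂ (Fin N) → ℂ,
    DifferentiableOn ℂ f (ball 0 1) ∧ DifferentiableOn ℂ g (ball 0 1) ∧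
      ∀ z ∈ ball (0 : EuclideanSpace ℂ (Fin N)) 1, h z = f z + conj (g z)

/-- `B(u)` has finite rank: it is a finite sum `Σ f_j conj(g_j)` with `f_j, g_j` holomorphic. -/
def FiniteRankBerezin (u : EuclideanSpace ℂ (Fin N) → ℂ) : Prop :=
  ∃ (n : ℕ) (f g : Fin n → EuclideanSpace ℂ (Fin N) → ℂ),
    (∀ j, DifferentiableOn ℂ (f j) (ball 0 1)) ∧
    (∀ j, DifferentiableOn ℂ (g j) (ball 0 1)) ∧
    ∀ z ∈ ball (0 : EuclideanSpace ℂ (Fin N)) 1,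
      berezin u z = ∑ j, f j z * conj (g j z)

/-- Wirtinger derivative `∂/∂z_j`. -/
def wdz (j : Fin N) (f : EuclideanSpace ℂ (Fin N) → ℂ) (z : EuclideanSpace ℂ (Fin N)) : ℂ :=
  (1 / 2 : ℂ) * (fderiv ℝ f z (EuclideanSpace.single j 1)
    - Complex.I * fderiv ℝ f z (EuclideanSpace.single j Complex.I))

/-- Wirtinger derivative `∂/∂conj(z_j)`. -/
def wdzbar (j : Fin N) (f : EuclideanSpace ℂ (Fin N) → ℂ) (z : EuclideanSpace ℂ (Fin N)) : ℂ :=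
  (1 / 2 : ℂ) * (fderiv ℝ f z (EuclideanSpace.single j 1)
    + Complex.I * fderiv ℝ f z (EuclideanSpace.single j Complex.I))

/-- The radial operator `E = Σ z_j ∂/∂z_j`. -/
def Eop (f : EuclideanSpace ℂ (Fin N) → ℂ) (z : EuclideanSpace ℂ (Fin N)) : ℂ :=
  ∑ j, z j * wdz j f z

/-- The radial operator `Ē = Σ conj(z_j) ∂/∂conj(z_j)`. -/
def Ebarop (f : EuclideanSpace ℂ (Fin N) → ℂ) (z : EuclideanSpace ℂ (Fin N)) : ℂ :=
  ∑ j, conj (z j) * wdzbar j f z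

/-- The Laplacian `Δ = Σ ∂²/(∂z_j ∂conj(z_j))`. -/
def lapOp (f : EuclideanSpace ℂ (Fin N) → ℂ) (z : EuclideanSpace ℂ (Fin N)) : ℂ :=
  ∑ j, wdz j (wdzbar j f) z

/-- The operator `|E+s|² − Δ = (E+s)∘(Ē+s) − Δ`. -/
def stepOp (s : ℝ) (f : EuclideanSpace ℂ (Fin N) → ℂ) : EuclideanSpace ℂ (Fin N) → ℂ :=
  fun z => (Eop (fun w => Ebarop f w + (s : ℂ) * f w) z
      + (s : ℂ) * (Ebarop f z + (s : ℂ) * f z)) - lapOp f z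

/-- The composition `(|E+m|²−Δ)∘(|E+(m−1)|²−Δ)∘⋯∘(|E+0|²−Δ)`. -/
def iterOp : ℕ → (EuclideanSpace ℂ (Fin N) → ℂ) → (EuclideanSpace ℂ (Fin N) → ℂ)
  | 0 => stepOp 0
  | (m + 1) => fun f => stepOp (m + 1) (iterOp m f)

/-- The invariant Laplacian `Δ̃ = (1−|z|²)(Δ − |E|²)`. -/
def invLap (f : EuclideanSpace ℂ (Fin N) → ℂ) (z : EuclideanSpace ℂ (Fin N)) : ℂ :=
  (((1 - ‖z‖ ^ 2 : ℝ)) : ℂ) * (lapOp f z - Eop (Ebarop f) z)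

/-- The operator `c − Δ̃` (a single factor of `p_m(Δ̃)`). -/
def factorOp (c : ℂ) (f : EuclideanSpace ℂ (Fin N) → ℂ) : EuclideanSpace ℂ (Fin N) → ℂ :=
  fun z => c * f z - invLap f z

/-- The product of operators `∏_{j=0}^{m} (j(j−N) − Δ̃)`. -/
def prodOp (N : ℕ) : ℕ → (EuclideanSpace ℂ (Fin N) → ℂ) → (EuclideanSpace ℂ (Fin N) → ℂ)
  | 0 => factorOp ((0 : ℂ) * ((0 : ℂ) - (N : ℂ)))
  | (m + 1) => fun f => factorOp (((m : ℂ) + 1) * (((m : ℂ) + 1) - (N : ℂ))) (prodOp N m f)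

open Classical in
/-- The Möbius automorphism `φ_w` of the unit ball interchanging `0` and `w`. -/
def mobius (w z : EuclideanSpace ℂ (Fin N)) : EuclideanSpace ℂ (Fin N) :=
  ((1 - hinner z w)⁻¹ : ℂ) •
    (w - (if w = 0 then 0 else (hinner z w / hinner w w) • w)
      - ((Real.sqrt (1 - ‖w‖ ^ 2) : ℝ) : ℂ) •
        (z - (if w = 0 then 0 else (hinner z w / hinner w w) • w)))
/-!
Induct on the set of frequencies. If `f(t) = Σ b_j e^{iλ_j t} → 0`, so does
`f(t + τ) - e^{iλ_a τ} f(t)`, an exponential sum without the frequency `λ_a` whose coefficients are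
`b_j (e^{iλ_j τ} - e^{iλ_a τ})`. For `τ = π / (λ_j - λ_a)` the factor is `-2 e^{iλ_a τ} ≠ 0`, so the
induction hypothesis gives `b_j = 0` for `j ≠ a`; the remaining term `b_a e^{iλ_a t}` has constant
modulus `‖b_a‖`, which must then be `0`.
-/

open Filter Topology

section ExpSum

variable {ι : Type*}

def expSum (s : Finset ι) (lam : ι → ℝ) (b : ι → ℂ) (t : ℝ) : ℂ :=
  ∑ j ∈ s, b j * exp (I * lam j * t)

lemma exp_I_mul_sub_exp_I_mul_ne_zero {l m : ℝ} (hlm : l ≠ m) :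
    exp (I * l * (Real.pi / (l - m) : ℝ)) - exp (I * m * (Real.pi / (l - m) : ℝ)) ≠ 0 := by
  have hsub : (l : ℂ) - m ≠ 0 := by exact_mod_cast sub_ne_zero.mpr hlm
  have hshift :
      I * l * (Real.pi / (l - m) : ℝ) = I * m * (Real.pi / (l - m) : ℝ) + Real.pi * I := by
    push_cast
    field_simp
    ring
  rw [hshift, exp_add, exp_pi_mul_I]
  intro h0
  exact exp_ne_zero _ (by linear_combination -h0 / 2)

lemma expSum_add_sub_mul_expSum (s : Finset ι) (lam : ι → ℝ) (b : ι → ℂ) (m h t : ℝ) :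
    expSum s lam b (t + h) - exp (I * m * h) * expSum s lam b t =
      expSum s lam (fun j => b j * (exp (I * lam j * h) - exp (I * m * h))) t := by
  simp only [expSum, Finset.mul_sum, ← Finset.sum_sub_distrib]
  refine Finset.sum_congr rfl fun j _ => ?_
  rw [ofReal_add, mul_add, exp_add]
  ring

lemma eq_zero_of_tendsto_mul_exp_I_mul {c : ℂ} {m : ℝ}
    (h : Tendsto (fun t : ℝ => c * exp (I * m * t)) atTop (𝓝 0)) : c = 0 := by
  have hnorm : ∀ t : ℝ, ‖c * exp (I * m * t)‖ = ‖c‖ := fun t => by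
    rw [norm_mul, mul_assoc, ← ofReal_mul, norm_exp_I_mul_ofReal, mul_one]
  have hc : Tendsto (fun _ : ℝ => ‖c‖) atTop (𝓝 0) := by
    simpa only [hnorm, norm_zero] using h.norm
  exact norm_eq_zero.mp (tendsto_nhds_unique tendsto_const_nhds hc)

theorem eq_zero_of_tendsto_expSum (s : Finset ι) {lam : ι → ℝ} (hlam : Set.InjOn lam s)
    (b : ι → ℂ) (h : Tendsto (expSum s lam b) atTop (𝓝 0)) : ∀ j ∈ s, b j = 0 := by
  classical
  induction s using Finset.induction_on generalizing b with
  | empty => simp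
  | insert a s ha ih =>
    have hlam' : Set.InjOn lam s := hlam.mono (by simp)
    have hdiff : ∀ τ : ℝ, ∀ j ∈ s,
        b j * (exp (I * lam j * τ) - exp (I * lam a * τ)) = 0 := fun τ => by
      refine ih hlam' _ ?_
      have hshift := (h.comp (tendsto_atTop_add_const_right _ τ tendsto_id)).sub
        (h.const_mul (exp (I * lam a * τ)))
      simp only [mul_zero, sub_zero] at hshift
      refine hshift.congr fun t => ?_
      rw [Function.comp_apply, id, expSum_add_sub_mul_expSum]
      simp [expSum, Finset.sum_insert ha]
    have hb : ∀ j ∈ s, b j = 0 := fun j hj => by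
      have hne : lam j ≠ lam a := fun heq => ha (hlam (by simp [hj]) (by simp) heq ▸ hj)
      exact (mul_eq_zero.mp (hdiff _ j hj)).resolve_right (exp_I_mul_sub_exp_I_mul_ne_zero hne)
    have hba : b a = 0 := by
      refine eq_zero_of_tendsto_mul_exp_I_mul (m := lam a) (h.congr fun t => ?_)
      rw [expSum, Finset.sum_insert ha, Finset.sum_eq_zero fun j hj => by rw [hb j hj, zero_mul],
        add_zero]
    simpa [hba] using hb

end ExpSum

theorem stmt4_general {s : ℕ} (lam : Fin s → ℝ) (hlam : Function.Injective lam)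
    (b : Fin s → ℂ)
    (h : Filter.Tendsto
      (fun t : ℝ => ∑ j, b j * Complex.exp (Complex.I * (lam j : ℂ) * (t : ℂ)))
      Filter.atTop (nhds 0)) :
    ∀ j, b j = 0 :=
  fun j => eq_zero_of_tendsto_expSum Finset.univ hlam.injOn b h j (Finset.mem_univ j)

/-- if a finite exponential sum `Σ b_j e^{iλ_j t}` with pairwise distinct real
frequencies tends to `0` as `t → ∞`, then all coefficients vanish. -/
theorem stmt4 {s : ℕ} (hs : 1 ≤ s) (lam : Fin s → ℝ) (hlam : Function.Injective lam)
    (b : Fin s → ℂ)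
    (h : Filter.Tendsto
      (fun t : ℝ => ∑ j, b j * Complex.exp (Complex.I * (lam j : ℂ) * (t : ℂ)))
      Filter.atTop (nhds 0)) :
    ∀ j, b j = 0 :=
  stmt4_general lam hlam b h

end
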